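/- Let N = 2·3^m with m ≥ 2, and let k be an integer with 0 ≤ k ≤ N−1. The (k mod N)-monomial minimal solution of (E_N) is reducible if and only if k is a multiple of 3 different from 3^m, from 3^{m−1}, and from 5·3^{m−1}. -/

import Mathlib

open Matrix

/-- The elementary matrix `[[a, -1], [1, 0]]` over `ZMod N`. -/
def genMat {N : ℕ} (a : ZMod N) : Matrix (Fin 2) (Fin 2) (ZMod N) :=
  !![a, -1; 1, 0]

/-- `Mword [a₁, …, aₙ]` is the matrix `Mₙ(a₁, …, aₙ) = genMat aₙ * ⋯ * genMat a₁`. -/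
def Mword {N : ℕ} (l : List (ZMod N)) : Matrix (Fin 2) (Fin 2) (ZMod N) :=
  (l.reverse.map genMat).prod

/-- A tuple (encoded as a list) is a solution of `(E_N)` if its matrix is `±Id`. -/
def IsSolutionE {N : ℕ} (l : List (ZMod N)) : Prop :=
  Mword l = 1 ∨ Mword l = -1

/-- The size of the `k`-monomial minimal solution of `(E_N)`: the least positive `n`
such that the constant `n`-tuple `(k, …, k)` is a solution of `(E_N)`. -/
noncomputable def monomialSize (N : ℕ) (k : ZMod N) : ℕ :=
  sInf {n : ℕ | 0 < n ∧ IsSolutionE (List.replicate n k)}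

/-- The `k`-monomial minimal solution of `(E_N)`. -/
noncomputable def monoSol (N : ℕ) (k : ZMod N) : List (ZMod N) :=
  List.replicate (monomialSize N k) k

/-- The sum `⊕` of two tuples:
`(a₁,…,aₘ) ⊕ (b₁,…,bₗ) = (a₁+bₗ, a₂, …, aₘ₋₁, aₘ+b₁, b₂, …, bₗ₋₁)`. -/
def oplus {N : ℕ} (a b : List (ZMod N)) : List (ZMod N) :=
  (a.headD 0 + b.getLastD 0) ::
    ((a.drop 1).dropLast ++ (a.getLastD 0 + b.headD 0) :: (b.drop 1).dropLast)

/-- Two tuples are equivalent (`∼`) if one is obtained from the other by a cyclic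
permutation, possibly composed with order reversal. -/
def TupEquiv {N : ℕ} (c d : List (ZMod N)) : Prop :=
  (∃ i, d = c.rotate i) ∨ (∃ i, d = c.reverse.rotate i)

/-- A tuple is reducible if it is equivalent to a sum `a ⊕ b` where `b` is a solution of
`(E_N)` and both `a`, `b` have length at least `3`. -/
def IsReducibleE {N : ℕ} (c : List (ZMod N)) : Prop :=
  ∃ a b : List (ZMod N), 3 ≤ a.length ∧ 3 ≤ b.length ∧ IsSolutionE b ∧
    TupEquiv c (oplus a b)

/-- An irreducible solution of `(E_N)`: a solution of size at least `3` that is not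
reducible (the solution `(0,0)` is not considered irreducible). -/
def IsIrreducibleE {N : ℕ} (c : List (ZMod N)) : Prop :=
  IsSolutionE c ∧ 3 ≤ c.length ∧ ¬ IsReducibleE c

/-- A reducible solution of `(E_N)`: a solution that is not irreducible. -/
def IsReducibleSol {N : ℕ} (c : List (ZMod N)) : Prop :=
  IsSolutionE c ∧ ¬ IsIrreducibleE c

/-- `N` is monomially irreducible if for every nonzero `k ∈ ZMod N` the `k`-monomial
minimal solution of `(E_N)` is irreducible. -/
def MonomiallyIrreducible (N : ℕ) : Prop :=
  ∀ k : ZMod N, k ≠ 0 → IsIrreducibleE (monoSol N k)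

/-- `N` is quasi monomially irreducible if for every integer `k` coprime to `N` the
`(k mod N)`-monomial minimal solution of `(E_N)` is irreducible. -/
def QuasiMonomiallyIrreducible (N : ℕ) : Prop :=
  ∀ k : ℤ, Int.gcd k (N : ℤ) = 1 → IsIrreducibleE (monoSol N (k : ZMod N))

/-- `N` is semi monomially irreducible: if `N` is even but not divisible by `4`, this
requires that for every integer `a` coprime to `N/2` the `(2a mod N)`-monomial minimal
solution of `(E_N)` is irreducible; otherwise (i.e. `N` odd or divisible by `4`), it
requires the same for every integer `a` coprime to `N`. -/
def SemiMonomiallyIrreducible (N : ℕ) : Prop :=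
  if 2 ∣ N ∧ ¬ (4 ∣ N) then
    ∀ a : ℤ, Int.gcd a ((N / 2 : ℕ) : ℤ) = 1 →
      IsIrreducibleE (monoSol N ((2 * a : ℤ) : ZMod N))
  else
    ∀ a : ℤ, Int.gcd a (N : ℤ) = 1 →
      IsIrreducibleE (monoSol N ((2 * a : ℤ) : ZMod N))

/-!
Write `U_n`, `V_n` for the Lucas sequences of `k`, so that
`[[k, -1], [1, 0]] ^ n = [[U_{n+1}, -U_n], [U_n, U_{n+1} - k U_n]]`. The monomial solution
`(k, …, k)` of size `n` splits off a solution `(x, k, …, k, y)` with `j` middle entries exactly when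
`U_{j+1} ≡ ±1`, and, since `±1` are the only square roots of `1` modulo `N = 2·3^m`, its size is
the least `n > 0` with `N ∣ U_n`.

If `3 ∤ k`, a residue `U_{j+1} ≡ ±1` gives `3^m ∣ U_j U_{j+2} = U_{j+1}^2 - 1`, hence a zero of `U`
modulo `3^m` strictly before the size, and the periods of `U` modulo `2` and `3` rule that out.
If `3 ∣ k` and `v = v_3(k)`, lifting the exponent through `V_{3r} = V_r (V_r^2 - 3)` gives
`v_3(V_r) = v + v_3(r)` for odd `r`, and `v_3(U_{2r}) = v + v_3(r)`. For `v < m` and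
`c = m - 1 - v`, `U` has no zero modulo `3^m` up to `2·3^c + 2`, while `U_{2t+1} + 1 = U_{t+1} V_t`
with `t = 3^c` is divisible by `3^m`, and by `2` unless `k` is odd and `c = 0`. What is left,
`k` odd with `3^{m-1} ∣ k`, are the three exceptional values; for them the size is at most `6` and
no `U_{j+1} ≡ ±1` occurs.
-/

section Words

variable {N : ℕ}

theorem Mword_cons (x : ZMod N) (l : List (ZMod N)) : Mword (x :: l) = Mword l * genMat x := by
  simp [Mword]

theorem Mword_append_singleton (l : List (ZMod N)) (y : ZMod N) :
    Mword (l ++ [y]) = genMat y * Mword l := by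
  simp [Mword]

theorem Mword_replicate (n : ℕ) (k : ZMod N) : Mword (List.replicate n k) = genMat k ^ n := by
  simp [Mword, List.prod_replicate]

theorem det_genMat (a : ZMod N) : (genMat a).det = 1 := by
  simp [genMat, Matrix.det_fin_two_of]

theorem Mword_cons_append_singleton (x y : ZMod N) (l : List (ZMod N)) :
    Mword (x :: (l ++ [y])) = genMat y * Mword l * genMat x := by
  rw [Mword_cons, Mword_append_singleton]

/-- The `(1, 1)` entry of `genMat y * B * genMat x` is `-B 0 0`; if `B 0 0 = ε = ±1`, the choice
`x = -ε B 0 1`, `y = ε B 1 0` makes the product `-ε`. -/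
theorem exists_genMat_mul_mul_genMat_eq_one_or_neg_one_iff
    (B : Matrix (Fin 2) (Fin 2) (ZMod N)) (hB : B.det = 1) :
    (∃ x y, genMat y * B * genMat x = 1 ∨ genMat y * B * genMat x = -1) ↔
      B 0 0 = 1 ∨ B 0 0 = -1 := by
  obtain ⟨a, b, c, d, rfl⟩ : ∃ a b c d, B = !![a, b; c, d] := ⟨_, _, _, _, B.eta_fin_two⟩
  rw [Matrix.det_fin_two_of] at hB
  simp only [genMat, Matrix.mul_fin_two, Matrix.one_fin_two, Matrix.of_apply, Matrix.cons_val_zero]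
  constructor
  · rintro ⟨x, y, h | h⟩ <;> have h11 := congrFun (congrFun h 1) 1 <;>
      simp only [Matrix.of_apply, Matrix.cons_val', Matrix.cons_val_one, Matrix.cons_val_fin_one,
        Matrix.neg_apply] at h11
    · exact Or.inr (by linear_combination -h11)
    · exact Or.inl (by linear_combination -h11)
  · rintro (rfl | rfl)
    · refine ⟨-b, c, Or.inr ?_⟩
      ext i j
      fin_cases i <;> fin_cases j <;> simp; linear_combination -hB
    · refine ⟨b, -c, Or.inl ?_⟩
      ext i j
      fin_cases i <;> fin_cases j <;> simp; linear_combination hB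

end Words

section Reducibility

variable {N : ℕ}

theorem List.exists_eq_cons_append_singleton {α : Type*} {L : List α} (h : 2 ≤ L.length) :
    ∃ x l y, L = x :: (l ++ [y]) := by
  obtain _ | ⟨x, L'⟩ := L
  · simp at h
  obtain rfl | ⟨l, y, rfl⟩ := L'.eq_nil_or_concat
  · simp at h
  exact ⟨x, l, y, by simp⟩

theorem oplus_cons_append_singleton (x y u w : ZMod N) (l r : List (ZMod N)) :
    oplus (x :: (l ++ [y])) (u :: (r ++ [w])) = (x + w) :: (l ++ (y + u) :: r) := by
  have hlast (a : ZMod N) (l : List (ZMod N)) (b : ZMod N) : (a :: (l ++ [b])).getLastD 0 = b := by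
    rw [← List.cons_append, List.getLastD_concat]
  simp only [oplus, hlast, List.headD_cons, List.drop_one, List.tail_cons, List.dropLast_concat]

theorem eq_replicate_of_tupEquiv_replicate {n : ℕ} {k : ZMod N} {d : List (ZMod N)}
    (h : TupEquiv (List.replicate n k) d) : d = List.replicate n k := by
  obtain ⟨i, rfl⟩ | ⟨i, rfl⟩ := h <;> simp [List.rotate_replicate]

theorem isReducibleE_replicate_iff (n : ℕ) (k : ZMod N) :
    IsReducibleE (List.replicate n k) ↔
      ∃ j, 1 ≤ j ∧ j + 3 ≤ n ∧ ∃ x y, IsSolutionE (x :: (List.replicate j k ++ [y])) := by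
  constructor
  · rintro ⟨a, b, ha, hb, hsol, hab⟩
    obtain ⟨x, l, y, rfl⟩ := List.exists_eq_cons_append_singleton (by omega : 2 ≤ a.length)
    obtain ⟨u, r, w, rfl⟩ := List.exists_eq_cons_append_singleton (by omega : 2 ≤ b.length)
    have hrep := eq_replicate_of_tupEquiv_replicate hab
    rw [oplus_cons_append_singleton, List.eq_replicate_iff] at hrep
    have hr : r = List.replicate r.length k :=
      List.eq_replicate_iff.mpr ⟨rfl, fun z hz => hrep.2 z (by simp [hz])⟩
    simp only [List.length_cons, List.length_append, List.length_nil] at ha hb hrep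
    exact ⟨r.length, by omega, by omega, u, w, hr ▸ hsol⟩
  · rintro ⟨j, hj, hjn, x, y, hsol⟩
    refine ⟨(k - y) :: (List.replicate (n - j - 2) k ++ [k - x]), x :: (List.replicate j k ++ [y]),
      ?_, ?_, hsol, Or.inl ⟨0, ?_⟩⟩
    any_goals simp only [List.length_cons, List.length_append, List.length_replicate]; omega
    rw [oplus_cons_append_singleton, List.rotate_zero, sub_add_cancel, sub_add_cancel,
      List.eq_replicate_iff]
    constructor
    · simp only [List.length_cons, List.length_append, List.length_replicate]; omega
    · simp only [List.mem_cons, List.mem_append, List.mem_replicate]; tauto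

end Reducibility

section Lucas

/-- `lucasU k` and `lucasV k` are the Lucas sequences `U_n(k, 1)` and `V_n(k, 1)`; `lucasV k n` is
the trace of `[[k, -1], [1, 0]] ^ n`. -/
def lucasU (k : ℤ) : ℕ → ℤ
  | 0 => 0
  | 1 => 1
  | n + 2 => k * lucasU k (n + 1) - lucasU k n

def lucasV (k : ℤ) (n : ℕ) : ℤ := 2 * lucasU k (n + 1) - k * lucasU k n

variable (k : ℤ)

@[simp] theorem lucasU_zero : lucasU k 0 = 0 := rfl

@[simp] theorem lucasU_one : lucasU k 1 = 1 := rfl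

theorem lucasU_add_two (n : ℕ) : lucasU k (n + 2) = k * lucasU k (n + 1) - lucasU k n := rfl

@[simp] theorem lucasU_two : lucasU k 2 = k := by simp [lucasU_add_two]

theorem lucasV_add_two (n : ℕ) : lucasV k (n + 2) = k * lucasV k (n + 1) - lucasV k n := by
  simp only [lucasV, lucasU_add_two]
  ring

@[simp] theorem lucasV_zero : lucasV k 0 = 2 := by simp [lucasV]

@[simp] theorem lucasV_one : lucasV k 1 = k := by
  simp only [lucasV, Nat.reduceAdd, lucasU_two, lucasU_one]; ring

theorem lucasU_succ_sq_sub_mul_add_sq (n : ℕ) :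
    lucasU k (n + 1) ^ 2 - k * lucasU k n * lucasU k (n + 1) + lucasU k n ^ 2 = 1 := by
  induction n with
  | zero => simp
  | succ n ih => rw [lucasU_add_two]; linear_combination ih

theorem lucasU_mul_lucasU_add_two (n : ℕ) :
    lucasU k n * lucasU k (n + 2) = lucasU k (n + 1) ^ 2 - 1 := by
  rw [lucasU_add_two]; linear_combination -lucasU_succ_sq_sub_mul_add_sq k n

theorem lucasU_add (a b : ℕ) :
    lucasU k (a + b) =
      lucasU k a * lucasU k (b + 1) + (lucasU k (a + 1) - k * lucasU k a) * lucasU k b := by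
  induction b generalizing a with
  | zero => simp
  | succ b ih =>
    rw [← add_assoc, add_right_comm, ih, lucasU_add_two, lucasU_add_two]
    ring

theorem lucasU_two_mul (n : ℕ) : lucasU k (2 * n) = lucasU k n * lucasV k n := by
  rw [two_mul, lucasU_add, lucasV]; ring

theorem lucasU_two_mul_add_one_add_one (n : ℕ) :
    lucasU k (2 * n + 1) + 1 = lucasU k (n + 1) * lucasV k n := by
  rw [two_mul, add_assoc, lucasU_add, lucasV, lucasU_add_two]
  linear_combination -lucasU_succ_sq_sub_mul_add_sq k n

theorem lucasV_three_mul (n : ℕ) : lucasV k (3 * n) = lucasV k n * (lucasV k n ^ 2 - 3) := by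
  have h1 := lucasU_add k n (2 * n)
  have h2 := lucasU_add k (n + 1) (2 * n)
  rw [show n + 2 * n = 3 * n by ring] at h1
  rw [show n + 1 + 2 * n = 3 * n + 1 by ring] at h2
  have h3 := lucasU_two_mul k n
  have h4 := lucasU_two_mul_add_one_add_one k n
  rw [lucasU_add_two, h3, eq_sub_of_add_eq h4] at h2
  rw [h3, eq_sub_of_add_eq h4] at h1
  simp only [lucasV] at *
  linear_combination 2 * h2 - k * h1 -
    2 * (2 * lucasU k (n + 1) - k * lucasU k n) * lucasU_succ_sq_sub_mul_add_sq k n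

end Lucas

/-- Reducibility of the monomial solution of size `n` modulo `M`, read off the matrix powers:
a solution `(x, k, …, k, y)` with `j` middle entries splits off iff `U_{j+1} ≡ ±1 (mod M)`. -/
def LucasReducible (M k : ℤ) (n : ℕ) : Prop :=
  n < 3 ∨ ∃ j, 1 ≤ j ∧ j + 3 ≤ n ∧ (M ∣ lucasU k (j + 1) - 1 ∨ M ∣ lucasU k (j + 1) + 1)

section Monomial

variable {N : ℕ}

theorem genMat_intCast_pow (k : ℤ) (n : ℕ) :
    genMat (k : ZMod N) ^ n =
      !![(lucasU k (n + 1) : ZMod N), -(lucasU k n : ZMod N);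
        (lucasU k n : ZMod N), (lucasU k (n + 1) : ZMod N) - k * lucasU k n] := by
  induction n with
  | zero => simp [Matrix.one_fin_two]
  | succ n ih =>
    rw [pow_succ', ih, genMat, Matrix.mul_fin_two, lucasU_add_two]
    simp only [EmbeddingLike.apply_eq_iff_eq, Matrix.vecCons_inj, and_true]
    push_cast
    exact ⟨⟨by ring, by ring⟩, by ring, by ring⟩

theorem exists_isSolutionE_cons_replicate_append_iff (k : ZMod N) (j : ℕ) :
    (∃ x y, IsSolutionE (x :: (List.replicate j k ++ [y]))) ↔
      (genMat k ^ j) 0 0 = 1 ∨ (genMat k ^ j) 0 0 = -1 := by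
  simp only [IsSolutionE, Mword_cons_append_singleton, Mword_replicate]
  exact exists_genMat_mul_mul_genMat_eq_one_or_neg_one_iff _
    (by rw [Matrix.det_pow, det_genMat, one_pow])

theorem isSolutionE_replicate_intCast_iff (hN : ∀ x : ZMod N, x ^ 2 = 1 → x = 1 ∨ x = -1)
    (k : ℤ) (n : ℕ) : IsSolutionE (List.replicate n (k : ZMod N)) ↔ (N : ℤ) ∣ lucasU k n := by
  rw [IsSolutionE, Mword_replicate, genMat_intCast_pow, ← ZMod.intCast_zmod_eq_zero_iff_dvd]
  constructor
  · rintro (h | h) <;> simpa [Matrix.one_fin_two] using congrFun (congrFun h 1) 0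
  · intro h
    have hsq : ((lucasU k (n + 1) : ℤ) : ZMod N) ^ 2 = 1 := by
      have := congrArg (Int.cast : ℤ → ZMod N) (lucasU_succ_sq_sub_mul_add_sq k n)
      push_cast [h] at this
      simpa using this
    rcases hN _ hsq with h1 | h1 <;> simp [h, h1, Matrix.one_fin_two]

theorem exists_pos_genMat_pow_eq_one [NeZero N] (k : ZMod N) : ∃ n, 0 < n ∧ genMat k ^ n = 1 := by
  let g : Matrix.SpecialLinearGroup (Fin 2) (ZMod N) := ⟨genMat k, det_genMat k⟩
  refine ⟨orderOf g, orderOf_pos g, ?_⟩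
  have h := Matrix.SpecialLinearGroup.coe_pow g (orderOf g)
  rwa [pow_orderOf_eq_one, Matrix.SpecialLinearGroup.coe_one, eq_comm] at h

theorem isLeast_monomialSize [NeZero N] (k : ZMod N) :
    IsLeast {n | 0 < n ∧ IsSolutionE (List.replicate n k)} (monomialSize N k) := by
  obtain ⟨n, hn, hk⟩ := exists_pos_genMat_pow_eq_one k
  exact ⟨Nat.sInf_mem ⟨n, hn, Or.inl (by rw [Mword_replicate, hk])⟩, fun _ => Nat.sInf_le⟩

theorem isLeast_monomialSize_intCast [NeZero N] (hN : ∀ x : ZMod N, x ^ 2 = 1 → x = 1 ∨ x = -1)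
    (k : ℤ) : IsLeast {n | 0 < n ∧ (N : ℤ) ∣ lucasU k n} (monomialSize N k) := by
  simpa only [isSolutionE_replicate_intCast_iff hN] using isLeast_monomialSize (k : ZMod N)

theorem isReducibleSol_iff_of_isSolutionE {c : List (ZMod N)} (hc : IsSolutionE c) :
    IsReducibleSol c ↔ c.length < 3 ∨ IsReducibleE c := by
  simp only [IsReducibleSol, IsIrreducibleE, hc, true_and, not_and, not_not, ← not_lt]
  tauto

theorem ZMod.intCast_eq_one_or_neg_one_iff (a : ℤ) :
    ((a : ZMod N) = 1 ∨ (a : ZMod N) = -1) ↔ (N : ℤ) ∣ a - 1 ∨ (N : ℤ) ∣ a + 1 := by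
  rw [← Int.cast_one, ← Int.cast_neg, ZMod.intCast_eq_intCast_iff_dvd_sub,
    ZMod.intCast_eq_intCast_iff_dvd_sub, dvd_sub_comm, show -1 - a = -(a + 1) by ring, dvd_neg]

theorem isReducibleSol_monoSol_intCast_iff [NeZero N] (k : ℤ) :
    IsReducibleSol (monoSol N k) ↔ LucasReducible N k (monomialSize N k) := by
  rw [monoSol, isReducibleSol_iff_of_isSolutionE (isLeast_monomialSize (k : ZMod N)).1.2,
    List.length_replicate, isReducibleE_replicate_iff, LucasReducible]
  simp only [exists_isSolutionE_cons_replicate_append_iff, genMat_intCast_pow]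
  simp [ZMod.intCast_eq_one_or_neg_one_iff]

end Monomial

section Divisibility

variable {k : ℤ}

theorem dvd_lucasU_iff_even {p : ℤ} (hp : ¬ IsUnit p) (hk : p ∣ k) :
    ∀ n, p ∣ lucasU k n ↔ Even n
  | 0 => by simp
  | 1 => by simpa [← isUnit_iff_dvd_one] using hp
  | n + 2 => by
    rw [lucasU_add_two, dvd_sub_right (dvd_mul_of_dvd_left hk _), dvd_lucasU_iff_even hp hk n]
    simp [parity_simps]

theorem dvd_lucasV_iff_odd {p : ℤ} (hp : ¬ p ∣ 2) (hk : p ∣ k) :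
    ∀ n, p ∣ lucasV k n ↔ Odd n
  | 0 => by simpa using hp
  | 1 => by simpa using hk
  | n + 2 => by
    rw [lucasV_add_two, dvd_sub_right (dvd_mul_of_dvd_left hk _), dvd_lucasV_iff_odd hp hk n]
    simp [parity_simps]

theorem dvd_lucasU_iff_three_dvd {p : ℤ} (hp : Prime p) (hk : p ∣ k ^ 2 - 1) (n : ℕ) :
    p ∣ lucasU k n ↔ 3 ∣ n := by
  have hpk : ¬ p ∣ k := fun h => hp.not_dvd_one <| (dvd_sub_right (dvd_pow h two_ne_zero)).mp hk
  induction n using Nat.strong_induction_on with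
  | _ n ih =>
    obtain _ | _ | _ | n := n
    · simp
    · simpa using hp.not_dvd_one
    · simpa using hpk
    · have h3 : lucasU k (n + 3) = (k ^ 2 - 1) * lucasU k (n + 1) - k * lucasU k n := by
        simp only [lucasU_add_two]; ring
      have hih : p ∣ lucasU k n ↔ 3 ∣ n := ih n (by omega)
      rw [h3, dvd_sub_right (dvd_mul_of_dvd_left hk _), hp.dvd_mul, or_iff_right hpk, hih]
      omega

end Divisibility

section Valuation

variable (k : ℤ)

theorem pow_three_dvd_lucasV_two_mul_add_one_sub :
    ∀ s : ℕ, k ^ 3 ∣ lucasV k (2 * s + 1) - (-1) ^ s * (2 * s + 1) * k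
  | 0 => by simp
  | 1 => ⟨1, by simp only [lucasV_add_two, Nat.reduceAdd, zero_add, lucasV_one, lucasV_zero]; ring⟩
  | s + 2 => by
    obtain ⟨a, ha⟩ := pow_three_dvd_lucasV_two_mul_add_one_sub s
    obtain ⟨b, hb⟩ := pow_three_dvd_lucasV_two_mul_add_one_sub (s + 1)
    have h1 := lucasV_add_two k (2 * s + 1)
    have h2 := lucasV_add_two k (2 * s + 2)
    have h3 := lucasV_add_two k (2 * s + 3)
    refine ⟨(k ^ 2 - 2) * b - a - (-1) ^ s * (2 * s + 3), ?_⟩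
    rw [show 2 * (s + 2) + 1 = 2 * s + 3 + 2 by ring]
    rw [show 2 * (s + 1) + 1 = 2 * s + 1 + 2 by ring] at hb
    push_cast at hb ⊢
    linear_combination h3 + k * h2 + h1 + (k ^ 2 - 2) * hb - ha

variable {k}

theorem emultiplicity_three_self : emultiplicity (3 : ℤ) 3 = 1 :=
  (FiniteMultiplicity.of_prime_left Int.prime_three three_ne_zero).emultiplicity_self

theorem emultiplicity_three_sq_sub_three {x : ℤ} (hx : 3 ∣ x) :
    emultiplicity (3 : ℤ) (x ^ 2 - 3) = 1 := by
  obtain ⟨t, rfl⟩ := hx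
  have hunit : ¬ (3 : ℤ) ∣ 3 * t ^ 2 - 1 := by
    rw [dvd_sub_right (dvd_mul_right 3 _)]; norm_num
  rw [show (3 * t) ^ 2 - 3 = 3 * (3 * t ^ 2 - 1) by ring, emultiplicity_mul Int.prime_three,
    emultiplicity_three_self, emultiplicity_eq_zero.mpr hunit, add_zero]

theorem emultiplicity_three_lucasV_of_not_dvd (hk : 3 ∣ k) {r : ℕ} (hr : Odd r) (h3 : ¬ 3 ∣ r) :
    emultiplicity (3 : ℤ) (lucasV k r) = emultiplicity 3 k := by
  obtain ⟨s, rfl⟩ := hr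
  obtain ⟨a, ha⟩ := pow_three_dvd_lucasV_two_mul_add_one_sub k s
  have hunit : ¬ (3 : ℤ) ∣ (-1) ^ s * (2 * s + 1) + k ^ 2 * a := by
    rw [dvd_add_left (dvd_mul_of_dvd_left (dvd_pow hk two_ne_zero) a),
      (isUnit_neg_one.pow s).dvd_mul_left]
    exact_mod_cast h3
  rw [show lucasV k (2 * s + 1) = k * ((-1) ^ s * (2 * s + 1) + k ^ 2 * a) by linear_combination ha,
    emultiplicity_mul Int.prime_three, emultiplicity_eq_zero.mpr hunit, add_zero]

theorem emultiplicity_three_lucasV_of_odd (hk : 3 ∣ k) {r : ℕ} (hr : Odd r) :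
    emultiplicity (3 : ℤ) (lucasV k r) = emultiplicity 3 k + emultiplicity (3 : ℤ) r := by
  induction r using Nat.strong_induction_on with
  | _ r ih =>
    by_cases h3 : 3 ∣ r
    · obtain ⟨s, rfl⟩ := h3
      have hs : Odd s := (Nat.odd_mul.mp hr).2
      have hVs : (3 : ℤ) ∣ lucasV k s := (dvd_lucasV_iff_odd (by norm_num) hk s).mpr hs
      rw [lucasV_three_mul, emultiplicity_mul Int.prime_three, emultiplicity_three_sq_sub_three hVs,
        ih s (by have := hs.pos; omega) hs, Nat.cast_mul, emultiplicity_mul Int.prime_three,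
        Nat.cast_ofNat, emultiplicity_three_self]
      ring
    · rw [emultiplicity_three_lucasV_of_not_dvd hk hr h3,
        emultiplicity_eq_zero.mpr (show ¬ (3 : ℤ) ∣ r by exact_mod_cast h3), add_zero]

theorem emultiplicity_three_lucasU_two_mul (hk : 3 ∣ k) (r : ℕ) :
    emultiplicity (3 : ℤ) (lucasU k (2 * r)) = emultiplicity 3 k + emultiplicity (3 : ℤ) r := by
  induction r using Nat.strong_induction_on with
  | _ r ih =>
    obtain ⟨s, rfl | rfl⟩ := Nat.even_or_odd' r
    · obtain rfl | hs := Nat.eq_zero_or_pos s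
      · simp
      have hV : ¬ (3 : ℤ) ∣ lucasV k (2 * s) := fun h =>
        Nat.not_odd_iff_even.mpr (even_two_mul s) ((dvd_lucasV_iff_odd (by norm_num) hk _).mp h)
      rw [lucasU_two_mul, emultiplicity_mul Int.prime_three, ih s (by omega),
        emultiplicity_eq_zero.mpr hV, add_zero, Nat.cast_mul, emultiplicity_mul Int.prime_three,
        emultiplicity_eq_zero.mpr (show ¬ (3 : ℤ) ∣ (2 : ℕ) by norm_num), zero_add]
    · have hU : ¬ (3 : ℤ) ∣ lucasU k (2 * s + 1) := fun h =>
        Nat.not_even_two_mul_add_one s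
          ((dvd_lucasU_iff_even Int.prime_three.not_isUnit hk _).mp h)
      rw [lucasU_two_mul, emultiplicity_mul Int.prime_three, emultiplicity_eq_zero.mpr hU, zero_add,
        emultiplicity_three_lucasV_of_odd hk (odd_two_mul_add_one s)]

end Valuation

section TwoMulPowThree

variable {m : ℕ}

theorem two_mul_pow_three_dvd_iff {x : ℤ} : 2 * 3 ^ m ∣ x ↔ 2 ∣ x ∧ 3 ^ m ∣ x :=
  ⟨fun h => ⟨(dvd_mul_right _ _).trans h, (dvd_mul_left _ _).trans h⟩, fun ⟨h2, h3⟩ =>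
    (IsCoprime.pow_right (Int.isCoprime_iff_gcd_eq_one.mpr rfl)).mul_dvd h2 h3⟩

theorem ZMod.eq_one_or_neg_one_of_sq_eq_one_of_two_mul_pow_three (x : ZMod (2 * 3 ^ m))
    (hx : x ^ 2 = 1) : x = 1 ∨ x = -1 := by
  obtain ⟨a, rfl⟩ := ZMod.intCast_surjective x
  rw [ZMod.intCast_eq_one_or_neg_one_iff]
  have ha : (2 * 3 ^ m : ℤ) ∣ (a - 1) * (a + 1) := by
    rw [← Int.cast_pow, ← Int.cast_one, ZMod.intCast_eq_intCast_iff_dvd_sub] at hx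
    rw [show (a - 1) * (a + 1) = -(1 - a ^ 2) by ring, dvd_neg]
    exact_mod_cast hx
  push_cast
  obtain ⟨h2, h3⟩ := two_mul_pow_three_dvd_iff.mp ha
  have h2' : 2 ∣ a - 1 ∧ 2 ∣ a + 1 := by
    rcases Int.prime_two.dvd_mul.mp h2 with h | h <;> omega
  simp only [two_mul_pow_three_dvd_iff, h2', true_and]
  by_cases h31 : (3 : ℤ) ∣ a - 1
  · exact Or.inl (Int.prime_three.pow_dvd_of_dvd_mul_right m (by omega) h3)
  · exact Or.inr (Int.prime_three.pow_dvd_of_dvd_mul_left m h31 h3)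

end TwoMulPowThree

section Irreducible

variable {m n : ℕ} {k : ℤ}

theorem three_dvd_sq_sub_one_of_not_dvd (hk : ¬ 3 ∣ k) : 3 ∣ k ^ 2 - 1 := by
  rw [show k ^ 2 - 1 = (k - 1) * (k + 1) by ring]
  rcases (by omega : (3 : ℤ) ∣ k - 1 ∨ 3 ∣ k + 1) with h | h
  · exact dvd_mul_of_dvd_left h _
  · exact dvd_mul_of_dvd_right h _

theorem two_dvd_sq_sub_one_of_not_dvd (hk : ¬ 2 ∣ k) : 2 ∣ k ^ 2 - 1 := by
  rw [show k ^ 2 - 1 = (k - 1) * (k + 1) by ring]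
  exact dvd_mul_of_dvd_left (by omega) _

theorem not_two_dvd_and_not_three_dvd_of_dvd_sub_one_or_dvd_add_one {x : ℤ} (hm : 1 ≤ m)
    (h : 2 * 3 ^ m ∣ x - 1 ∨ 2 * 3 ^ m ∣ x + 1) : ¬ 2 ∣ x ∧ ¬ 3 ∣ x := by
  have key {p : ℤ} (hp : ¬ IsUnit p) (hpN : p ∣ 2 * 3 ^ m) : ¬ p ∣ x := fun hx =>
    hp <| isUnit_of_dvd_one <| h.elim (fun h => (dvd_sub_right hx).mp (hpN.trans h))
      (fun h => (dvd_add_right hx).mp (hpN.trans h))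
  exact ⟨key Int.prime_two.not_isUnit (dvd_mul_right _ _),
    key Int.prime_three.not_isUnit ((dvd_pow_self 3 (by omega)).trans (dvd_mul_left _ _))⟩

theorem three_le_of_isLeast_of_not_dvd (hk : ¬ 2 * 3 ^ m ∣ k)
    (hn : IsLeast {n | 0 < n ∧ 2 * 3 ^ m ∣ lucasU k n} n) : 3 ≤ n := by
  obtain ⟨⟨hn0, hdvd⟩, -⟩ := hn
  by_contra! h
  interval_cases n
  · have := (two_mul_pow_three_dvd_iff.mp hdvd).1
    norm_num at this
  · exact hk (by simpa using hdvd)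

theorem two_dvd_and_odd_of_pow_three_dvd_lucasU (hm : 1 ≤ m) (hk : ¬ 3 ∣ k)
    (hn : IsLeast {n | 0 < n ∧ 2 * 3 ^ m ∣ lucasU k n} n) {a : ℕ} (ha : 0 < a) (han : a < n)
    (hU : 3 ^ m ∣ lucasU k a) : 2 ∣ k ∧ Odd a := by
  have hU2 : ¬ 2 ∣ lucasU k a := fun h2 =>
    (not_le.mpr han) (hn.2 ⟨ha, two_mul_pow_three_dvd_iff.mpr ⟨h2, hU⟩⟩)
  have h3a : 3 ∣ a := (dvd_lucasU_iff_three_dvd Int.prime_three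
    (three_dvd_sq_sub_one_of_not_dvd hk) a).mp ((dvd_pow_self 3 (by omega)).trans hU)
  by_cases h2k : 2 ∣ k
  · exact ⟨h2k, Nat.not_even_iff_odd.mp fun he =>
      hU2 ((dvd_lucasU_iff_even Int.prime_two.not_isUnit h2k a).mpr he)⟩
  · exact absurd ((dvd_lucasU_iff_three_dvd Int.prime_two
      (two_dvd_sq_sub_one_of_not_dvd h2k) a).mpr h3a) hU2

theorem not_lucasReducible_of_not_three_dvd (hm : 1 ≤ m) (hk : ¬ 3 ∣ k)
    (hn : IsLeast {n | 0 < n ∧ 2 * 3 ^ m ∣ lucasU k n} n) :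
    ¬ LucasReducible (2 * 3 ^ m) k n := by
  have hk3 : 3 ∣ k ^ 2 - 1 := three_dvd_sq_sub_one_of_not_dvd hk
  rintro (hn3 | ⟨j, hj, hjn, hU⟩)
  · refine (three_le_of_isLeast_of_not_dvd (fun h => hk ?_) hn).not_gt hn3
    exact (dvd_pow_self 3 (by omega)).trans (two_mul_pow_three_dvd_iff.mp h).2
  obtain ⟨hx2, hx3⟩ := not_two_dvd_and_not_three_dvd_of_dvd_sub_one_or_dvd_add_one hm hU
  have hprod : 3 ^ m ∣ lucasU k j * lucasU k (j + 2) := by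
    rw [lucasU_mul_lucasU_add_two, show lucasU k (j + 1) ^ 2 - 1 =
      (lucasU k (j + 1) - 1) * (lucasU k (j + 1) + 1) by ring]
    exact (dvd_mul_left _ 2).trans (hU.elim (dvd_mul_of_dvd_left · _) (dvd_mul_of_dvd_right · _))
  have hdvd3 := dvd_lucasU_iff_three_dvd Int.prime_three hk3
  have hj1 : ¬ 3 ∣ j + 1 := fun h => hx3 ((hdvd3 _).mpr h)
  obtain ⟨a, ha0, han, hUa, hpar⟩ :
      ∃ a, 0 < a ∧ a < n ∧ 3 ^ m ∣ lucasU k a ∧ (Even a ↔ Even j) := by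
    rcases (by omega : 3 ∣ j ∨ 3 ∣ j + 2) with h | h
    · refine ⟨j, by omega, by omega, Int.prime_three.pow_dvd_of_dvd_mul_right m ?_ hprod, Iff.rfl⟩
      rw [hdvd3]; omega
    · refine ⟨j + 2, by omega, by omega, Int.prime_three.pow_dvd_of_dvd_mul_left m ?_ hprod, ?_⟩
      · rw [hdvd3]; omega
      · simp [parity_simps]
  obtain ⟨h2k, ha⟩ := two_dvd_and_odd_of_pow_three_dvd_lucasU hm hk hn ha0 han hUa
  refine hx2 ((dvd_lucasU_iff_even Int.prime_two.not_isUnit h2k _).mpr ?_)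
  rw [Nat.even_add_one, ← hpar]
  exact Nat.not_even_iff_odd.mpr ha

theorem not_lucasReducible_of_odd_of_pow_dvd (hm : 2 ≤ m) (hodd : Odd k) (hk : 3 ^ (m - 1) ∣ k)
    (hn : IsLeast {n | 0 < n ∧ 2 * 3 ^ m ∣ lucasU k n} n) :
    ¬ LucasReducible (2 * 3 ^ m) k n := by
  have h2k : ¬ 2 ∣ k := Int.not_even_iff_odd.mpr hodd ∘ even_iff_two_dvd.mpr
  have h3k : 3 ∣ k := (dvd_pow_self 3 (by omega)).trans hk
  have hn6 : n ≤ 6 := by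
    refine hn.2 ⟨by norm_num, two_mul_pow_three_dvd_iff.mpr ⟨?_, ?_⟩⟩ <;>
      rw [show lucasU k 6 = (k ^ 2 - 1) * (k * (k ^ 2 - 3)) by
        simp only [lucasU_add_two, Nat.reduceAdd, zero_add, lucasU_one, lucasU_zero]; ring]
    · exact dvd_mul_of_dvd_left (two_dvd_sq_sub_one_of_not_dvd h2k) _
    · refine dvd_mul_of_dvd_right ?_ _
      rw [show m = m - 1 + 1 by omega, pow_succ]
      exact mul_dvd_mul hk ((dvd_sub_right (dvd_pow h3k two_ne_zero)).mpr dvd_rfl)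
  rintro (hn3 | ⟨j, hj, hjn, hU⟩)
  · exact (three_le_of_isLeast_of_not_dvd
      (fun h => h2k ((dvd_mul_right _ _).trans h)) hn).not_gt hn3
  have hj : j = 2 := by
    have hx3 := (not_two_dvd_and_not_three_dvd_of_dvd_sub_one_or_dvd_add_one (by omega) hU).2
    rw [dvd_lucasU_iff_even Int.prime_three.not_isUnit h3k, Nat.even_add_one, not_not] at hx3
    obtain ⟨i, rfl⟩ := hx3
    omega
  subst hj
  have hU3 : lucasU k 3 = k ^ 2 - 1 := by
    simp only [lucasU_add_two, Nat.reduceAdd, zero_add, lucasU_one, lucasU_zero]; ring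
  rw [hU3, sub_sub, sub_add_cancel] at hU
  rcases hU with h | h
  · have h3 := (dvd_pow_self 3 (by omega : m ≠ 0)).trans ((dvd_mul_left _ 2).trans h)
    rw [dvd_sub_right (dvd_pow h3k two_ne_zero)] at h3
    norm_num at h3
  · exact h2k (Int.prime_two.dvd_of_dvd_pow ((dvd_mul_right _ _).trans h))

end Irreducible

section Reducible

variable {m n v : ℕ} {k : ℤ}

theorem three_dvd_of_emultiplicity_eq (hk : emultiplicity (3 : ℤ) k = v) (hv : 1 ≤ v) : 3 ∣ k := by
  simpa using pow_dvd_iff_le_emultiplicity.mpr (hk ▸ (by exact_mod_cast hv) : ((1 : ℕ) : ℕ∞) ≤ _)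

theorem pow_three_dvd_lucasU_two_mul_pow_three_add_one_add_one (hk : emultiplicity (3 : ℤ) k = v)
    (hv : 1 ≤ v) (c : ℕ) : 3 ^ (v + c + 1) ∣ lucasU k (2 * 3 ^ c + 1) + 1 := by
  have h3k := three_dvd_of_emultiplicity_eq hk hv
  have hodd : Odd (3 ^ c) := Odd.pow (by decide)
  rw [lucasU_two_mul_add_one_add_one, pow_succ']
  refine mul_dvd_mul ((dvd_lucasU_iff_even Int.prime_three.not_isUnit h3k _).mpr hodd.add_one) ?_
  rw [pow_dvd_iff_le_emultiplicity, emultiplicity_three_lucasV_of_odd h3k hodd, hk, Nat.cast_pow,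
    Nat.cast_ofNat, emultiplicity_pow_self_of_prime Int.prime_three, Nat.cast_add]

theorem two_dvd_lucasU_two_mul_pow_three_add_one_add_one {c : ℕ} (h : 2 ∣ k ∨ 1 ≤ c) :
    2 ∣ lucasU k (2 * 3 ^ c + 1) + 1 := by
  suffices ¬ 2 ∣ lucasU k (2 * 3 ^ c + 1) by omega
  by_cases h2k : 2 ∣ k
  · rw [dvd_lucasU_iff_even Int.prime_two.not_isUnit h2k]
    exact Nat.not_even_two_mul_add_one _
  · rw [dvd_lucasU_iff_three_dvd Int.prime_two (two_dvd_sq_sub_one_of_not_dvd h2k)]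
    have : 3 ∣ 3 ^ c := dvd_pow_self 3 (by omega)
    omega

theorem not_pow_three_dvd_lucasU_of_le (hk : emultiplicity (3 : ℤ) k = v) (hv : 1 ≤ v) {a c : ℕ}
    (ha : 0 < a) (hac : a ≤ 2 * 3 ^ c + 2) : ¬ 3 ^ (v + c + 1) ∣ lucasU k a := by
  have h3k := three_dvd_of_emultiplicity_eq hk hv
  obtain ⟨r, rfl | rfl⟩ := Nat.even_or_odd' a
  · rw [pow_dvd_iff_le_emultiplicity, emultiplicity_three_lucasU_two_mul h3k, hk, add_assoc,
      Nat.cast_add, ENat.add_le_add_iff_left (ENat.natCast_ne_top v),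
      ← pow_dvd_iff_le_emultiplicity, ← Nat.cast_ofNat, ← Nat.cast_pow, Int.natCast_dvd_natCast]
    intro h
    have := Nat.le_of_dvd (by omega) h
    rw [pow_succ] at this
    omega
  · exact fun h => Nat.not_even_two_mul_add_one r ((dvd_lucasU_iff_even Int.prime_three.not_isUnit
      h3k _).mp ((dvd_pow_self 3 (by omega)).trans h))

theorem lucasReducible_of_emultiplicity_eq {c : ℕ} (hk : emultiplicity (3 : ℤ) k = v) (hv : 1 ≤ v)
    (hm : v + c + 1 = m) (hpar : 2 ∣ k ∨ 1 ≤ c)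
    (hn : IsLeast {n | 0 < n ∧ 2 * 3 ^ m ∣ lucasU k n} n) :
    LucasReducible (2 * 3 ^ m) k n := by
  subst hm
  refine Or.inr ⟨2 * 3 ^ c, by have := Nat.one_le_pow c 3 (by norm_num); omega, ?_, Or.inr ?_⟩
  · by_contra! h
    exact not_pow_three_dvd_lucasU_of_le hk hv hn.1.1 (by omega)
      (two_mul_pow_three_dvd_iff.mp hn.1.2).2
  · exact two_mul_pow_three_dvd_iff.mpr ⟨two_dvd_lucasU_two_mul_pow_three_add_one_add_one hpar,
      pow_three_dvd_lucasU_two_mul_pow_three_add_one_add_one hk hv c⟩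

end Reducible

section Main

variable {m k : ℕ}

theorem odd_and_pow_three_dvd_of_eq (hm : 1 ≤ m)
    (h : k = 3 ^ m ∨ k = 3 ^ (m - 1) ∨ k = 5 * 3 ^ (m - 1)) :
    Odd k ∧ 3 ^ (m - 1) ∣ k := by
  have hpow : Odd (3 ^ (m - 1)) := Odd.pow (by decide)
  rcases h with rfl | rfl | rfl
  · rw [show m = m - 1 + 1 by omega, pow_succ, Nat.add_sub_cancel]
    exact ⟨hpow.mul (by decide), dvd_mul_right _ _⟩
  · exact ⟨hpow, dvd_rfl⟩
  · exact ⟨(by decide : Odd 5).mul hpow, dvd_mul_left _ _⟩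

theorem lt_of_pow_three_mul_le {v u : ℕ} (hu : u ≠ 0) (hk : 3 ^ v * u ≤ 2 * 3 ^ m - 1)
    (h1 : 3 ^ v * u ≠ 3 ^ m) : v < m := by
  by_contra! hmv
  have e : 3 ^ v = 3 ^ m * 3 ^ (v - m) := by rw [← pow_add]; congr 1; omega
  have hlt : 3 ^ (v - m) * u < 2 := by
    refine Nat.lt_of_mul_lt_mul_left (a := 3 ^ m) ?_
    rw [← mul_assoc, ← e]
    have := Nat.one_le_pow m 3 (by norm_num)
    omega
  obtain rfl : u = 1 := by
    have : u ≤ 3 ^ (v - m) * u := Nat.le_mul_of_pos_left u (by positivity)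
    omega
  have hvm : 3 ^ (v - m) = 1 := by
    have := Nat.one_le_pow (v - m) 3 (by norm_num)
    omega
  exact h1 (by rw [e, hvm]; ring)

theorem two_dvd_of_pow_three_mul_le {u : ℕ} (hm : 1 ≤ m) (hk : 3 ^ (m - 1) * u ≤ 2 * 3 ^ m - 1)
    (hu : ¬ 3 ∣ u) (h0 : u ≠ 0) (h1 : u ≠ 1) (h5 : u ≠ 5) : 2 ∣ u := by
  have hu6 : u < 6 := by
    have e : 3 ^ m = 3 * 3 ^ (m - 1) := by rw [← pow_succ']; congr 1; omega
    have := Nat.one_le_pow (m - 1) 3 (by norm_num)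
    by_contra! h
    have := Nat.mul_le_mul_left (3 ^ (m - 1)) h
    omega
  interval_cases u <;> simp_all

theorem exists_emultiplicity_three_eq (hk : k ≤ 2 * 3 ^ m - 1) (hk0 : k ≠ 0) (h3 : 3 ∣ k)
    (h1 : k ≠ 3 ^ m) (h2 : k ≠ 3 ^ (m - 1)) (h5 : k ≠ 5 * 3 ^ (m - 1)) :
    ∃ v c : ℕ, emultiplicity (3 : ℤ) k = v ∧ 1 ≤ v ∧ v + c + 1 = m ∧ (2 ∣ (k : ℤ) ∨ 1 ≤ c) := by
  obtain ⟨v, u, hu, rfl⟩ := Nat.exists_eq_pow_mul_and_not_dvd hk0 3 (by norm_num)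
  have hu0 : u ≠ 0 := by rintro rfl; simp at hk0
  have hv : 1 ≤ v := by
    by_contra! hv
    simp_all
  have hvm := lt_of_pow_three_mul_le hu0 hk h1
  refine ⟨v, m - 1 - v, ?_, hv, by omega, ?_⟩
  · push_cast
    rw [emultiplicity_mul Int.prime_three, emultiplicity_pow_self_of_prime Int.prime_three,
      emultiplicity_eq_zero.mpr (by exact_mod_cast hu), add_zero]
  · by_cases hc : 1 ≤ m - 1 - v
    · exact Or.inr hc
    obtain rfl : v = m - 1 := by omega
    refine Or.inl (Int.natCast_dvd_natCast.mpr (dvd_mul_of_dvd_right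
      (two_dvd_of_pow_three_mul_le (by omega) hk hu hu0 ?_ ?_) _))
    · rintro rfl; simp at h2
    · rintro rfl; exact h5 (mul_comm _ _)

end Main

/-- for `N = 2·3^m` with `m ≥ 2` and `0 ≤ k ≤ N - 1`, the `(k mod N)`-monomial
minimal solution of `(E_N)` is reducible iff `k` is a multiple of `3` different from `3^m`,
`3^(m-1)` and `5·3^(m-1)`. -/
theorem stmt_2 (m : ℕ) (hm : 2 ≤ m) (k : ℕ) (hk : k ≤ 2 * 3 ^ m - 1) :
    IsReducibleSol (monoSol (2 * 3 ^ m) (k : ZMod (2 * 3 ^ m))) ↔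
      (3 ∣ k ∧ k ≠ 3 ^ m ∧ k ≠ 3 ^ (m - 1) ∧ k ≠ 5 * 3 ^ (m - 1)) := by
  have hn := isLeast_monomialSize_intCast (N := 2 * 3 ^ m)
    ZMod.eq_one_or_neg_one_of_sq_eq_one_of_two_mul_pow_three (k : ℤ)
  rw [← Int.cast_natCast, isReducibleSol_monoSol_intCast_iff]
  push_cast at hn ⊢
  constructor
  · contrapose
    intro h
    by_cases h3 : 3 ∣ k
    · obtain ⟨hodd, hdvd⟩ := odd_and_pow_three_dvd_of_eq (m := m) (k := k) (by omega) (by tauto)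
      exact not_lucasReducible_of_odd_of_pow_dvd hm (by exact_mod_cast hodd)
        (by exact_mod_cast hdvd) hn
    · exact not_lucasReducible_of_not_three_dvd (by omega) (by exact_mod_cast h3) hn
  · rintro ⟨h3, h1, h2, h5⟩
    obtain rfl | hk0 := eq_or_ne k 0
    · exact Or.inl (lt_of_le_of_lt (hn.2 ⟨two_pos, by simp⟩) (by norm_num))
    obtain ⟨v, c, hv, hv1, hvc, hpar⟩ := exists_emultiplicity_three_eq hk hk0 h3 h1 h2 h5
    exact lucasReducible_of_emultiplicity_eq hv hv1 hvc hpar hn
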